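/- Suppose (X,J) is a perfect quasimetric space in which, for all sufficiently large N, the geodesic problem over Path_N(x,y) has a minimizer for each pair x,y. Then (X,D_J) is a length space: for every x,y ∈ X with L = D_J(x,y), there exists f: [0,L] → X with f(0)=x, f(L)=y, and D_J(f(t),f(s)) = |t−s| for all t,s ∈ [0,L]. -/

import Mathlib

/-!
Fix `x, y` and `N` so large that `D_J^{(N)}(x,y) = D_J(x,y)` and a minimizing `N`-piecewise
curve `g : [0,1] → X` exists. Let `ℓ(s)` be the length of `g` on `[0,s]`. Restricting `g` to
`[a,b]` (clamping the parameter, which keeps the number of pieces) gives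
`D_J(g a, g b) ≤ ℓ b - ℓ a`; as `g` is minimizing, the triangle inequality for `D_J`
(concatenation of curves) turns this into an equality. The length `ℓ` is additive and
Lipschitz, so by the intermediate value theorem it has a right inverse on `[0, D_J(x,y)]`,
and `g` composed with it is the required isometry; reversing curves makes `D_J` symmetric,
which covers `t > s`.
-/

open Filter Topology
open scoped ENNReal

variable {X : Type*}

/-- The length (in `[0,∞]`) of `f` on `[u,v]`, computed as the supremum of
variations `∑ J (f (t i)) (f (t (i+1)))` over all monotone chains
`u = t 0 ≤ t 1 ≤ ⋯ ≤ t n = v`. -/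
noncomputable def pieceLen (J : X → X → ℝ) (f : ℝ → X) (u v : ℝ) : ℝ≥0∞ :=
  ⨆ (n : ℕ) (t : ℕ → ℝ) (_ : Monotone t ∧ t 0 = u ∧ t n = v),
    ∑ i ∈ Finset.range n, ENNReal.ofReal (J (f (t i)) (f (t (i + 1))))

/-- On the piece `[u,v]`, `J` is a metric on the image `f([u,v])` (i.e. the
genuine triangle inequality holds there) and `f` is Lipschitz. -/
def IsPiece (J : X → X → ℝ) (f : ℝ → X) (u v : ℝ) : Prop :=
  (∀ s ∈ Set.Icc u v, ∀ t ∈ Set.Icc u v, ∀ r ∈ Set.Icc u v,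
      J (f s) (f r) ≤ J (f s) (f t) + J (f t) (f r)) ∧
  (∃ C : ℝ, ∀ s ∈ Set.Icc u v, ∀ t ∈ Set.Icc u v, J (f s) (f t) ≤ C * |s - t|)

/-- `f : [a,b] → (X,J)` is an `N`-piecewise metric Lipschitz curve with
partition `P`: `a = P 0 < P 1 < ⋯ < P N = b`, and on each `[P i, P (i+1)]`
the function `J` is a metric on the image and `f` is Lipschitz. -/
def IsPML (J : X → X → ℝ) (N : ℕ) (a b : ℝ) (f : ℝ → X) (P : ℕ → ℝ) : Prop :=
  P 0 = a ∧ P N = b ∧ (∀ i < N, P i < P (i + 1)) ∧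
  ∀ i < N, IsPiece J f (P i) (P (i + 1))

/-- The length of an `N`-piecewise metric Lipschitz curve: the sum of the
lengths of its pieces. -/
noncomputable def pmlLength (J : X → X → ℝ) (N : ℕ) (f : ℝ → X) (P : ℕ → ℝ) : ℝ≥0∞ :=
  ∑ i ∈ Finset.range N, pieceLen J f (P i) (P (i + 1))

/-- `D_J^{(N)}(x,y)`: the infimal length of `N`-piecewise metric Lipschitz
curves on `[0,1]` from `x` to `y` (`∞` if there are none). -/
noncomputable def DJN (J : X → X → ℝ) (N : ℕ) (x y : X) : ℝ≥0∞ :=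
  ⨅ (f : ℝ → X) (P : ℕ → ℝ) (_ : IsPML J N 0 1 f P ∧ f 0 = x ∧ f 1 = y),
    pmlLength J N f P

/-- `D_J(x,y) = lim_{N→∞} D_J^{(N)}(x,y)`; since `D_J^{(N)}` is nonincreasing
in `N`, this limit is the infimum over `N`. -/
noncomputable def DJ (J : X → X → ℝ) (x y : X) : ℝ≥0∞ :=
  ⨅ N : ℕ, DJN J N x y

open Set

section PieceLen

variable {J : X → X → ℝ} {f g : ℝ → X} {u v w : ℝ}

lemma sum_le_pieceLen {n : ℕ} {t : ℕ → ℝ} (ht : Monotone t) (ht0 : t 0 = u) (htn : t n = v) :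
    ∑ i ∈ Finset.range n, ENNReal.ofReal (J (f (t i)) (f (t (i + 1)))) ≤ pieceLen J f u v :=
  le_iSup₂_of_le n t (le_iSup_of_le ⟨ht, ht0, htn⟩ le_rfl)

lemma pieceLen_le_of_forall {B : ℝ≥0∞}
    (h : ∀ (n : ℕ) (t : ℕ → ℝ), Monotone t → t 0 = u → t n = v →
      ∑ i ∈ Finset.range n, ENNReal.ofReal (J (f (t i)) (f (t (i + 1)))) ≤ B) :
    pieceLen J f u v ≤ B :=
  iSup_le fun n => iSup₂_le fun t ht => h n t ht.1 ht.2.1 ht.2.2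

lemma pieceLen_eq_iSup_prod : pieceLen J f u v =
    ⨆ c : ℕ × (ℕ → ℝ), ⨆ (_ : Monotone c.2 ∧ c.2 0 = u ∧ c.2 c.1 = v),
      ∑ i ∈ Finset.range c.1, ENNReal.ofReal (J (f (c.2 i)) (f (c.2 (i + 1)))) := by
  rw [iSup_prod]; rfl

lemma Monotone.mem_Icc_zero {t : ℕ → ℝ} (ht : Monotone t) {i n : ℕ} (hi : i ≤ n) :
    t i ∈ Icc (t 0) (t n) :=
  ⟨ht (Nat.zero_le i), ht hi⟩

lemma monotone_ite_zero (huv : u ≤ v) : Monotone fun i : ℕ => if i = 0 then u else v := by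
  intro a b hab
  dsimp only
  split_ifs <;> first | exact le_rfl | exact huv | omega

lemma ofReal_le_pieceLen (huv : u ≤ v) : ENNReal.ofReal (J (f u) (f v)) ≤ pieceLen J f u v := by
  simpa using sum_le_pieceLen (J := J) (f := f) (n := 1) (monotone_ite_zero huv) rfl rfl

lemma pieceLen_self (hJ : ∀ z, J z z = 0) (f : ℝ → X) (u : ℝ) : pieceLen J f u u = 0 := by
  refine nonpos_iff_eq_zero.1 (pieceLen_le_of_forall fun n t ht ht0 htn => ?_)
  have hconst : ∀ i ≤ n, t i = u := fun i hi => by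
    simpa [ht0, htn] using ht.mem_Icc_zero hi
  refine (Finset.sum_eq_zero fun i hi => ?_).le
  rw [Finset.mem_range] at hi
  rw [hconst i hi.le, hconst (i + 1) hi, hJ, ENNReal.ofReal_zero]

lemma pieceLen_add_pieceLen_le (huv : u ≤ v) (hvw : v ≤ w) :
    pieceLen J f u v + pieceLen J f v w ≤ pieceLen J f u w := by
  rw [pieceLen_eq_iSup_prod, pieceLen_eq_iSup_prod]
  refine ENNReal.biSup_add_biSup_le' ⟨(1, _), monotone_ite_zero huv, rfl, rfl⟩
    ⟨(1, _), monotone_ite_zero hvw, rfl, rfl⟩ ?_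
  rintro ⟨n, t⟩ ⟨ht, ht0, htn⟩ ⟨m, s⟩ ⟨hs, hs0, hsm⟩
  dsimp only at ht ht0 htn hs hs0 hsm ⊢
  set T : ℕ → ℝ := fun i => if i ≤ n then t i else s (i - n) with hT
  have hT_left : ∀ i ≤ n, T i = t i := fun i hi => if_pos hi
  have hT_right : ∀ i, n ≤ i → T i = s (i - n) := fun i hi => by
    rcases hi.eq_or_lt with rfl | hi
    · simp [hT, htn, hs0]
    · exact if_neg (by omega)
  have hTmono : Monotone T := by
    refine monotone_nat_of_le_succ fun i => ?_
    rcases lt_or_ge i n with hi | hi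
    · rw [hT_left i hi.le, hT_left (i + 1) hi]
      exact ht (Nat.le_succ i)
    · rw [hT_right i hi, hT_right (i + 1) (by omega)]
      exact hs (by omega)
  refine le_of_eq_of_le ?_ (sum_le_pieceLen hTmono (by rw [hT_left 0 (Nat.zero_le n), ht0])
    (by rw [hT_right (n + m) (by omega), Nat.add_sub_cancel_left, hsm]))
  rw [Finset.sum_range_add]
  congr 1
  · refine Finset.sum_congr rfl fun i hi => ?_
    rw [Finset.mem_range] at hi
    rw [hT_left i hi.le, hT_left (i + 1) hi]
  · refine Finset.sum_congr rfl fun i _ => ?_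
    rw [hT_right (n + i) (by omega), hT_right (n + i + 1) (by omega), Nat.add_sub_cancel_left,
      show n + i + 1 - n = i + 1 by omega]

lemma pieceLen_le_add_pieceLen (hJ : ∀ z, J z z = 0)
    (htri : ∀ s ∈ Icc u w, ∀ t ∈ Icc u w, ∀ r ∈ Icc u w,
      J (f s) (f r) ≤ J (f s) (f t) + J (f t) (f r))
    (huv : u ≤ v) (hvw : v ≤ w) :
    pieceLen J f u w ≤ pieceLen J f u v + pieceLen J f v w := by
  refine pieceLen_le_of_forall fun n t ht ht0 htn => ?_
  have hsplit : ∀ i < n, ENNReal.ofReal (J (f (t i)) (f (t (i + 1)))) ≤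
      ENNReal.ofReal (J (f (min (t i) v)) (f (min (t (i + 1)) v))) +
        ENNReal.ofReal (J (f (max (t i) v)) (f (max (t (i + 1)) v))) := by
    intro i hi
    have hle : t i ≤ t (i + 1) := ht (Nat.le_succ i)
    rcases le_total (t (i + 1)) v with h | h
    · rw [min_eq_left (hle.trans h), min_eq_left h, max_eq_right (hle.trans h), max_eq_right h,
        hJ, ENNReal.ofReal_zero, add_zero]
    rcases le_total v (t i) with h' | h'
    · rw [min_eq_right h', min_eq_right h, max_eq_left h', max_eq_left h, hJ,
        ENNReal.ofReal_zero, zero_add]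
    rw [min_eq_left h', min_eq_right h, max_eq_right h', max_eq_left h]
    have hmem : ∀ j ≤ n, t j ∈ Icc u w := fun j hj => ht0 ▸ htn ▸ ht.mem_Icc_zero hj
    exact (ENNReal.ofReal_le_ofReal (htri _ (hmem i hi.le) v ⟨huv, hvw⟩ _ (hmem _ hi))).trans
      ENNReal.ofReal_add_le
  calc _ ≤ ∑ i ∈ Finset.range n,
        (ENNReal.ofReal (J (f (min (t i) v)) (f (min (t (i + 1)) v))) +
          ENNReal.ofReal (J (f (max (t i) v)) (f (max (t (i + 1)) v)))) :=
        Finset.sum_le_sum fun i hi => hsplit i (Finset.mem_range.1 hi)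
    _ ≤ _ := by
      rw [Finset.sum_add_distrib]
      refine add_le_add (sum_le_pieceLen (fun a b hab => min_le_min_right v (ht hab)) ?_ ?_)
        (sum_le_pieceLen (fun a b hab => max_le_max_right v (ht hab)) ?_ ?_)
      · rw [ht0, min_eq_left huv]
      · rw [htn, min_eq_right hvw]
      · rw [ht0, max_eq_right huv]
      · rw [htn, max_eq_left hvw]

lemma pieceLen_add_pieceLen (hJ : ∀ z, J z z = 0)
    (htri : ∀ s ∈ Icc u w, ∀ t ∈ Icc u w, ∀ r ∈ Icc u w,
      J (f s) (f r) ≤ J (f s) (f t) + J (f t) (f r))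
    (huv : u ≤ v) (hvw : v ≤ w) :
    pieceLen J f u v + pieceLen J f v w = pieceLen J f u w :=
  (pieceLen_add_pieceLen_le huv hvw).antisymm (pieceLen_le_add_pieceLen hJ htri huv hvw)

lemma pieceLen_le_ofReal_mul {C : ℝ} (hC : 0 ≤ C)
    (hf : ∀ s ∈ Icc u v, ∀ t ∈ Icc u v, J (f s) (f t) ≤ C * |s - t|) :
    pieceLen J f u v ≤ ENNReal.ofReal (C * (v - u)) := by
  refine pieceLen_le_of_forall fun n t ht ht0 htn => ?_
  have hmem : ∀ j ≤ n, t j ∈ Icc u v := fun j hj => ht0 ▸ htn ▸ ht.mem_Icc_zero hj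
  have hstep : ∀ i ∈ Finset.range n, 0 ≤ C * (t (i + 1) - t i) := fun i _ =>
    mul_nonneg hC (sub_nonneg.2 (ht (Nat.le_succ i)))
  calc _ ≤ ∑ i ∈ Finset.range n, ENNReal.ofReal (C * (t (i + 1) - t i)) := by
        refine Finset.sum_le_sum fun i hi => ENNReal.ofReal_le_ofReal ?_
        rw [Finset.mem_range] at hi
        have h := hf _ (hmem i hi.le) _ (hmem (i + 1) hi)
        rwa [abs_sub_comm, abs_of_nonneg (sub_nonneg.2 (ht (Nat.le_succ i)))] at h
    _ = ENNReal.ofReal (C * (v - u)) := by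
        rw [← ENNReal.ofReal_sum_of_nonneg hstep, ← Finset.mul_sum, Finset.sum_range_sub, ht0, htn]

lemma pieceLen_comp_le_of_monotoneOn {φ : ℝ → ℝ} (hφ : MonotoneOn φ (Icc u v)) :
    pieceLen J (f ∘ φ) u v ≤ pieceLen J f (φ u) (φ v) := by
  refine pieceLen_le_of_forall fun n t ht ht0 htn => ?_
  have hmem : ∀ j, t (min j n) ∈ Icc u v := fun j =>
    ht0 ▸ htn ▸ ht.mem_Icc_zero (min_le_right j n)
  refine le_of_eq_of_le ?_ (sum_le_pieceLen (n := n) (u := φ u) (v := φ v) (t := fun i => φ (t (min i n)))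
    (fun a b hab => hφ (hmem a) (hmem b) (ht (min_le_min_right n hab)))
    (by simp [ht0]) (by simp [htn]))
  refine Finset.sum_congr rfl fun i hi => ?_
  rw [Finset.mem_range] at hi
  simp only [Function.comp_apply, min_eq_left hi.le, min_eq_left (Nat.succ_le_of_lt hi)]

lemma pieceLen_comp_le_of_antitoneOn (hsymm : ∀ x y, J x y = J y x) {φ : ℝ → ℝ}
    (hφ : AntitoneOn φ (Icc u v)) :
    pieceLen J (f ∘ φ) u v ≤ pieceLen J f (φ v) (φ u) := by
  refine pieceLen_le_of_forall fun n t ht ht0 htn => ?_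
  have hmem : ∀ j, t (n - j) ∈ Icc u v := fun j =>
    ht0 ▸ htn ▸ ht.mem_Icc_zero (Nat.sub_le n j)
  refine le_of_eq_of_le ?_ (sum_le_pieceLen (n := n) (u := φ v) (v := φ u) (t := fun i => φ (t (n - i)))
    (fun a b hab => hφ (hmem b) (hmem a) (ht (Nat.sub_le_sub_left hab n)))
    (by simp [htn]) (by simp [ht0]))
  rw [← Finset.sum_range_reflect]
  refine Finset.sum_congr rfl fun i hi => ?_
  rw [Finset.mem_range] at hi
  rw [show n - 1 - i + 1 = n - i by omega, show n - 1 - i = n - (i + 1) by omega, hsymm]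
  rfl

lemma pieceLen_congr (h : EqOn f g (Icc u v)) : pieceLen J f u v = pieceLen J g u v := by
  refine iSup_congr fun n => iSup_congr fun t => iSup_congr fun ht => Finset.sum_congr rfl fun i hi => ?_
  have hmem : ∀ j ≤ n, t j ∈ Icc u v := fun j hj => ht.2.1 ▸ ht.2.2 ▸ ht.1.mem_Icc_zero hj
  rw [Finset.mem_range] at hi
  rw [h (hmem i hi.le), h (hmem (i + 1) hi)]

end PieceLen

section Curves

variable {J : X → X → ℝ} {f g : ℝ → X} {u v : ℝ} {N : ℕ} {P : ℕ → ℝ}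

lemma IsPiece.exists_lipschitz_nonneg (hf : IsPiece J f u v) :
    ∃ C, 0 ≤ C ∧ ∀ s ∈ Icc u v, ∀ t ∈ Icc u v, J (f s) (f t) ≤ C * |s - t| := by
  obtain ⟨C, hC⟩ := hf.2
  exact ⟨max C 0, le_max_right C 0, fun s hs t ht =>
    (hC s hs t ht).trans (mul_le_mul_of_nonneg_right (le_max_left C 0) (abs_nonneg _))⟩

lemma IsPiece.mono {u' v' : ℝ} (hf : IsPiece J f u v) (hu : u ≤ u') (hv : v' ≤ v) :
    IsPiece J f u' v' := by
  have hsub := Icc_subset_Icc hu hv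
  exact ⟨fun s hs t ht r hr => hf.1 s (hsub hs) t (hsub ht) r (hsub hr),
    hf.2.imp fun C hC s hs t ht => hC s (hsub hs) t (hsub ht)⟩

lemma isPiece_self (hJ : ∀ z, J z z = 0) (f : ℝ → X) (u : ℝ) : IsPiece J f u u := by
  have hu : ∀ s ∈ Icc u u, s = u := fun s hs => le_antisymm hs.2 hs.1
  refine ⟨fun s hs t ht r hr => ?_, 0, fun s hs t ht => ?_⟩ <;> simp [hu s hs, hu t ht, hJ]

lemma IsPiece.comp {u' v' K : ℝ} {φ : ℝ → ℝ} (hf : IsPiece J f u' v')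
    (hφ : MapsTo φ (Icc u v) (Icc u' v'))
    (hlip : ∀ s ∈ Icc u v, ∀ t ∈ Icc u v, |φ s - φ t| ≤ K * |s - t|) :
    IsPiece J (f ∘ φ) u v := by
  obtain ⟨C, hC0, hC⟩ := hf.exists_lipschitz_nonneg
  refine ⟨fun s hs t ht r hr => hf.1 _ (hφ hs) _ (hφ ht) _ (hφ hr), C * K, fun s hs t ht => ?_⟩
  calc J (f (φ s)) (f (φ t)) ≤ C * |φ s - φ t| := hC _ (hφ hs) _ (hφ ht)
    _ ≤ C * (K * |s - t|) := mul_le_mul_of_nonneg_left (hlip s hs t ht) hC0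
    _ = C * K * |s - t| := (mul_assoc _ _ _).symm

lemma IsPiece.congr (hf : IsPiece J f u v) (h : EqOn f g (Icc u v)) : IsPiece J g u v := by
  refine ⟨fun s hs t ht r hr => ?_, hf.2.imp fun C hC s hs t ht => ?_⟩
  · rw [← h hs, ← h ht, ← h hr]
    exact hf.1 s hs t ht r hr
  · rw [← h hs, ← h ht]
    exact hC s hs t ht

lemma IsPML.partition_le {a b : ℝ} (hf : IsPML J N a b f P) {i j : ℕ} (hij : i ≤ j)
    (hj : j ≤ N) : P i ≤ P j := by
  induction hij with
  | refl => exact le_rfl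
  | step _ ih => exact (ih (by omega)).trans (hf.2.2.1 _ (by omega)).le

lemma IsPML.partition_mem {a b : ℝ} (hf : IsPML J N a b f P) {i : ℕ} (hi : i ≤ N) :
    P i ∈ Icc a b :=
  ⟨hf.1 ▸ hf.partition_le (Nat.zero_le i) hi, hf.2.1 ▸ hf.partition_le hi le_rfl⟩

lemma DJN_le_pmlLength {x y : X} (hf : IsPML J N 0 1 f P) (hx : f 0 = x) (hy : f 1 = y) :
    DJN J N x y ≤ pmlLength J N f P :=
  iInf₂_le_of_le f P (iInf_le_of_le ⟨hf, hx, hy⟩ le_rfl)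

lemma exists_pmlLength_lt_of_DJN_lt {x y : X} {B : ℝ≥0∞} (h : DJN J N x y < B) :
    ∃ f P, (IsPML J N 0 1 f P ∧ f 0 = x ∧ f 1 = y) ∧ pmlLength J N f P < B := by
  simpa only [DJN, iInf_lt_iff, exists_prop] using h

lemma DJ_le_DJN (x y : X) (N : ℕ) : DJ J x y ≤ DJN J N x y :=
  iInf_le _ N

lemma IsPML.reverse (hf : IsPML J N 0 1 f P) :
    IsPML J N 0 1 (f ∘ fun s => 1 - s) (fun i => 1 - P (N - i)) := by
  obtain ⟨hP0, hPN, hlt, hpiece⟩ := hf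
  refine ⟨by simp [hPN], by simp [hP0], fun i hi => ?_, fun i hi => ?_⟩
  · have := hlt (N - (i + 1)) (by omega)
    rw [show N - (i + 1) + 1 = N - i by omega] at this
    dsimp only
    linarith
  · have := hpiece (N - (i + 1)) (by omega)
    rw [show N - (i + 1) + 1 = N - i by omega] at this
    refine this.comp (K := 1) (fun s hs => ⟨by linarith [hs.2], by linarith [hs.1]⟩)
      fun s _ t _ => le_of_eq ?_
    rw [one_mul, ← abs_neg]
    ring_nf

lemma pmlLength_reverse_le (hsymm : ∀ x y, J x y = J y x) :
    pmlLength J N (f ∘ fun s => 1 - s) (fun i => 1 - P (N - i)) ≤ pmlLength J N f P := by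
  rw [pmlLength, pmlLength, ← Finset.sum_range_reflect (fun i => pieceLen J f (P i) (P (i + 1)))]
  refine Finset.sum_le_sum fun i hi => ?_
  rw [Finset.mem_range] at hi
  have := pieceLen_comp_le_of_antitoneOn (f := f) (u := 1 - P (N - i))
    (v := 1 - P (N - (i + 1))) hsymm fun a _ b _ hab => sub_le_sub_left hab 1
  rw [sub_sub_cancel, sub_sub_cancel] at this
  rwa [show N - 1 - i + 1 = N - i by omega, show N - 1 - i = N - (i + 1) by omega]

lemma DJN_swap_le (hsymm : ∀ x y, J x y = J y x) (N : ℕ) (x y : X) :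
    DJN J N y x ≤ DJN J N x y :=
  le_iInf₂ fun f P => le_iInf fun ⟨hf, hx, hy⟩ =>
    (DJN_le_pmlLength hf.reverse (by simp [hy]) (by simp [hx])).trans (pmlLength_reverse_le hsymm)

lemma DJ_comm (hsymm : ∀ x y, J x y = J y x) (x y : X) : DJ J x y = DJ J y x :=
  le_antisymm (iInf_mono fun N => DJN_swap_le hsymm N y x)
    (iInf_mono fun N => DJN_swap_le hsymm N x y)

end Curves

section Concat

variable {J : X → X → ℝ} {f g : ℝ → X} {M N : ℕ} {P Q : ℕ → ℝ}

noncomputable def concatCurve (f g : ℝ → X) (s : ℝ) : X :=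
  if s ≤ 1 / 2 then f (2 * s) else g (2 * s - 1)

noncomputable def concatPartition (M : ℕ) (P Q : ℕ → ℝ) (i : ℕ) : ℝ :=
  if i ≤ M then P i / 2 else (1 + Q (i - M)) / 2

lemma concatPartition_of_le {i : ℕ} (hi : i ≤ M) : concatPartition M P Q i = P i / 2 :=
  if_pos hi

lemma concatPartition_add (hP : P M = 1) (hQ : Q 0 = 0) (j : ℕ) :
    concatPartition M P Q (M + j) = (1 + Q j) / 2 := by
  rcases j.eq_zero_or_pos with rfl | hj
  · simp [concatPartition, hP, hQ]
  · simp [concatPartition, show ¬ M + j ≤ M by omega]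

lemma IsPML.concat_piece_left (hf : IsPML J M 0 1 f P) {i : ℕ} (hi : i < M) :
    IsPiece J (concatCurve f g) (P i / 2) (P (i + 1) / 2) ∧
      pieceLen J (concatCurve f g) (P i / 2) (P (i + 1) / 2) ≤ pieceLen J f (P i) (P (i + 1)) := by
  have heq : EqOn (f ∘ fun s => 2 * s) (concatCurve f g) (Icc (P i / 2) (P (i + 1) / 2)) :=
    fun s hs => (if_pos (by linarith [hs.2, (hf.partition_mem hi).2])).symm
  refine ⟨((hf.2.2.2 i hi).comp (K := 2) (fun s hs => ⟨by linarith [hs.1], by linarith [hs.2]⟩)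
    fun s _ t _ => by rw [← mul_sub, abs_mul, abs_two]).congr heq, ?_⟩
  rw [← pieceLen_congr heq]
  convert pieceLen_comp_le_of_monotoneOn (J := J) (f := f) (φ := fun s => 2 * s)
    (u := P i / 2) (v := P (i + 1) / 2) (fun a _ b _ hab => by linarith) using 2 <;> ring

lemma IsPML.concat_piece_right (hg : IsPML J N 0 1 g Q) (hfg : f 1 = g 0) {j : ℕ} (hj : j < N) :
    IsPiece J (concatCurve f g) ((1 + Q j) / 2) ((1 + Q (j + 1)) / 2) ∧
      pieceLen J (concatCurve f g) ((1 + Q j) / 2) ((1 + Q (j + 1)) / 2) ≤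
        pieceLen J g (Q j) (Q (j + 1)) := by
  have heq : EqOn (g ∘ fun s => 2 * s - 1) (concatCurve f g)
      (Icc ((1 + Q j) / 2) ((1 + Q (j + 1)) / 2)) := by
    intro s hs
    have hs' : 1 / 2 ≤ s := by linarith [hs.1, (hg.partition_mem hj.le).1]
    rcases hs'.eq_or_lt with rfl | hlt
    · simp [concatCurve, hfg]
    · exact (if_neg hlt.not_ge).symm
  refine ⟨((hg.2.2.2 j hj).comp (K := 2) (fun s hs => ⟨by linarith [hs.1], by linarith [hs.2]⟩)
    fun s _ t _ => by rw [sub_sub_sub_cancel_right, ← mul_sub, abs_mul, abs_two]).congr heq, ?_⟩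
  rw [← pieceLen_congr heq]
  convert pieceLen_comp_le_of_monotoneOn (J := J) (f := g) (φ := fun s => 2 * s - 1)
    (u := (1 + Q j) / 2) (v := (1 + Q (j + 1)) / 2) (fun a _ b _ hab => by linarith) using 2 <;> ring

lemma forall_lt_add_iff {p : ℕ → Prop} :
    (∀ i < M + N, p i) ↔ (∀ i < M, p i) ∧ ∀ j < N, p (M + j) := by
  refine ⟨fun h => ⟨fun i hi => h i (by omega), fun j hj => h (M + j) (by omega)⟩,
    fun h i hi => ?_⟩
  rcases lt_or_ge i M with hiM | hiM
  · exact h.1 i hiM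
  · obtain ⟨j, rfl⟩ := Nat.exists_eq_add_of_le hiM
    exact h.2 j (by omega)

lemma IsPML.concat (hf : IsPML J M 0 1 f P) (hg : IsPML J N 0 1 g Q) (hfg : f 1 = g 0) :
    IsPML J (M + N) 0 1 (concatCurve f g) (concatPartition M P Q) := by
  have hR := concatPartition_add (P := P) hf.2.1 hg.1
  have hRl : ∀ i < M, concatPartition M P Q i = P i / 2 ∧
      concatPartition M P Q (i + 1) = P (i + 1) / 2 := fun i hi =>
    ⟨concatPartition_of_le hi.le, concatPartition_of_le hi⟩
  refine ⟨by simp [concatPartition_of_le, hf.1], by simp [hR, hg.2.1],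
    forall_lt_add_iff.2 ⟨fun i hi => ?_, fun j hj => ?_⟩,
    forall_lt_add_iff.2 ⟨fun i hi => ?_, fun j hj => ?_⟩⟩
  · rw [(hRl i hi).1, (hRl i hi).2]
    linarith [hf.2.2.1 i hi]
  · rw [hR, add_assoc, hR]
    linarith [hg.2.2.1 j hj]
  · rw [(hRl i hi).1, (hRl i hi).2]
    exact (hf.concat_piece_left hi).1
  · rw [hR, add_assoc, hR]
    exact (hg.concat_piece_right hfg hj).1

lemma pmlLength_concat_le (hf : IsPML J M 0 1 f P) (hg : IsPML J N 0 1 g Q) (hfg : f 1 = g 0) :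
    pmlLength J (M + N) (concatCurve f g) (concatPartition M P Q) ≤
      pmlLength J M f P + pmlLength J N g Q := by
  rw [pmlLength, Finset.sum_range_add]
  refine add_le_add (Finset.sum_le_sum fun i hi => ?_) (Finset.sum_le_sum fun j hj => ?_)
  · rw [Finset.mem_range] at hi
    rw [concatPartition_of_le hi.le, concatPartition_of_le hi]
    exact (hf.concat_piece_left hi).2
  · rw [Finset.mem_range] at hj
    rw [concatPartition_add hf.2.1 hg.1, add_assoc, concatPartition_add hf.2.1 hg.1]
    exact (hg.concat_piece_right hfg hj).2

lemma DJ_triangle (x y z : X) : DJ J x z ≤ DJ J x y + DJ J y z := by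
  simp only [DJ]
  rw [ENNReal.iInf_add]
  refine le_iInf fun M => ?_
  rw [ENNReal.add_iInf]
  refine le_iInf fun N => ENNReal.le_of_forall_pos_le_add fun ε hε hlt => ?_
  have hε2 : (ε / 2 : ℝ≥0∞) ≠ 0 := by simp [hε.ne']
  obtain ⟨f, P, ⟨hf, hfx, hfy⟩, hflt⟩ :=
    exists_pmlLength_lt_of_DJN_lt (ENNReal.lt_add_right (ENNReal.add_lt_top.1 hlt).1.ne hε2)
  obtain ⟨g, Q, ⟨hg, hgy, hgz⟩, hglt⟩ :=
    exists_pmlLength_lt_of_DJN_lt (ENNReal.lt_add_right (ENNReal.add_lt_top.1 hlt).2.ne hε2)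
  have hfg : f 1 = g 0 := hfy.trans hgy.symm
  calc DJ J x z ≤ DJN J (M + N) x z := DJ_le_DJN x z _
    _ ≤ pmlLength J M f P + pmlLength J N g Q :=
      (DJN_le_pmlLength (hf.concat hg hfg) (by simp [concatCurve, hfx])
        (by norm_num [concatCurve, hgz])).trans (pmlLength_concat_le hf hg hfg)
    _ ≤ (DJN J M x y + ε / 2) + (DJN J N y z + ε / 2) := add_le_add hflt.le hglt.le
    _ = DJN J M x y + DJN J N y z + ε := by rw [add_add_add_comm, ENNReal.add_halves]

end Concat

section ArcLength

def clip (a b s : ℝ) : ℝ := max (min s b) a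

variable {a b c d s : ℝ}

lemma clip_mem (hab : a ≤ b) (s : ℝ) : clip a b s ∈ Icc a b :=
  ⟨le_max_right _ _, max_le (min_le_right _ _) hab⟩

lemma clip_of_le (hs : s ≤ a) : clip a b s = a :=
  max_eq_right ((min_le_left s b).trans hs)

lemma clip_of_ge (hab : a ≤ b) (hs : b ≤ s) : clip a b s = b := by
  rw [clip, min_eq_right hs, max_eq_left hab]

lemma monotone_clip (a b : ℝ) : Monotone (clip a b) := fun _ _ hst =>
  max_le_max (min_le_min_right b hst) le_rfl

lemma abs_clip_sub_clip_le (a b s t : ℝ) : |clip a b s - clip a b t| ≤ |s - t| := by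
  refine (abs_max_sub_max_le_abs _ _ _).trans ((abs_min_sub_min_le_max _ _ _ _).trans ?_)
  simp

/-- Clipping `[c, d]` to `[a, b]` gives the same interval as clipping `[a, b]` to `[c, d]`,
unless the intervals are disjoint, and then it gives a single point. -/
lemma clip_cases (hab : a ≤ b) (hcd : c ≤ d) :
    (clip a b c = clip c d a ∧ clip a b d = clip c d b) ∨ clip a b c = clip a b d := by
  simp only [clip]
  by_cases h : a ≤ d ∧ c ≤ b
  · left
    grind
  · right
    grind

variable {J : X → X → ℝ} {g : ℝ → X}

lemma IsPiece.clip_Icc (hJ : ∀ z, J z z = 0) (hg : IsPiece J g c d) (hab : a ≤ b) (hcd : c ≤ d) :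
    IsPiece J g (clip a b c) (clip a b d) := by
  rcases clip_cases hab hcd with ⟨h1, h2⟩ | h
  · rw [h1, h2]
    exact hg.mono (clip_mem hcd a).1 (clip_mem hcd b).2
  · rw [h]
    exact isPiece_self hJ g _

lemma pieceLen_clip_le (hJ : ∀ z, J z z = 0) (hab : a ≤ b) (hcd : c ≤ d) :
    pieceLen J g (clip a b c) (clip a b d) ≤ pieceLen J g (clip c d a) (clip c d b) := by
  rcases clip_cases hab hcd with ⟨h1, h2⟩ | h
  · rw [h1, h2]
  · rw [h, pieceLen_self hJ]
    exact zero_le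

variable {N : ℕ} {P : ℕ → ℝ} {p q : ℝ}

/-- The length of `g` on `[a, b]`, measured piece by piece on `[a, b]` clipped to each
`[P i, P (i + 1)]`. -/
noncomputable def arcLen (J : X → X → ℝ) (N : ℕ) (g : ℝ → X) (P : ℕ → ℝ) (a b : ℝ) : ℝ≥0∞ :=
  ∑ i ∈ Finset.range N, pieceLen J g (clip (P i) (P (i + 1)) a) (clip (P i) (P (i + 1)) b)

lemma IsPML.arcLen_add (hJ : ∀ z, J z z = 0) (hg : IsPML J N p q g P) (hab : a ≤ b)
    (hbc : b ≤ c) : arcLen J N g P a b + arcLen J N g P b c = arcLen J N g P a c := by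
  rw [arcLen, arcLen, arcLen, ← Finset.sum_add_distrib]
  refine Finset.sum_congr rfl fun i hi => ?_
  have hle := (hg.2.2.1 i (Finset.mem_range.1 hi)).le
  exact pieceLen_add_pieceLen hJ
    ((hg.2.2.2 i (Finset.mem_range.1 hi)).mono (clip_mem hle a).1 (clip_mem hle c).2).1
    (monotone_clip _ _ hab) (monotone_clip _ _ hbc)

lemma IsPML.arcLen_eq_pmlLength (hg : IsPML J N p q g P) :
    arcLen J N g P p q = pmlLength J N g P := by
  refine Finset.sum_congr rfl fun i hi => ?_
  rw [Finset.mem_range] at hi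
  rw [clip_of_le (hg.partition_mem hi.le).1,
    clip_of_ge (hg.2.2.1 i hi).le (hg.partition_mem hi).2]

lemma IsPML.exists_arcLen_le (hg : IsPML J N p q g P) :
    ∃ C, 0 ≤ C ∧ ∀ a b, a ≤ b → arcLen J N g P a b ≤ ENNReal.ofReal (C * (b - a)) := by
  choose C hC0 hC using fun i : Fin N => (hg.2.2.2 i i.2).exists_lipschitz_nonneg
  refine ⟨∑ i, C i, Finset.sum_nonneg fun i _ => hC0 i, fun a b hab => ?_⟩
  rw [arcLen, Finset.sum_range, Finset.sum_mul,
    ENNReal.ofReal_sum_of_nonneg fun i _ => mul_nonneg (hC0 i) (sub_nonneg.2 hab)]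
  refine Finset.sum_le_sum fun i _ => ?_
  have hle := (hg.2.2.1 i i.2).le
  have hsub := Icc_subset_Icc (clip_mem hle a).1 (clip_mem hle b).2
  refine (pieceLen_le_ofReal_mul (hC0 i) fun s hs t ht => hC i s (hsub hs) t (hsub ht)).trans
    (ENNReal.ofReal_le_ofReal (mul_le_mul_of_nonneg_left ?_ (hC0 i)))
  have := abs_clip_sub_clip_le (P i) (P (i + 1)) b a
  rw [abs_of_nonneg (sub_nonneg.2 hab)] at this
  exact (le_abs_self _).trans this

lemma IsPML.DJ_le_arcLen (hJ : ∀ z, J z z = 0) (hg : IsPML J N 0 1 g P) (ha : 0 ≤ a)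
    (hab : a ≤ b) (hb : b ≤ 1) : DJ J (g a) (g b) ≤ arcLen J N g P a b := by
  have hrestrict : IsPML J N 0 1 (g ∘ clip a b) P := by
    refine ⟨hg.1, hg.2.1, hg.2.2.1, fun i hi => ?_⟩
    refine ((hg.2.2.2 i hi).clip_Icc hJ hab (hg.2.2.1 i hi).le).comp (K := 1)
      (monotone_clip a b).mapsTo_Icc fun s _ t _ => ?_
    rw [one_mul]
    exact abs_clip_sub_clip_le a b s t
  refine (DJ_le_DJN _ _ N).trans ((DJN_le_pmlLength hrestrict ?_ ?_).trans
    (Finset.sum_le_sum fun i hi => ?_))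
  · simp [clip_of_le ha]
  · simp [clip_of_ge hab hb]
  · exact (pieceLen_comp_le_of_monotoneOn ((monotone_clip a b).monotoneOn _)).trans
      (pieceLen_clip_le hJ hab (hg.2.2.1 i (Finset.mem_range.1 hi)).le)

lemma IsPML.apply_eq_of_pmlLength_eq_zero (hnonneg : ∀ x y, 0 ≤ J x y)
    (hiff : ∀ x y, J x y = 0 ↔ x = y) (hg : IsPML J N p q g P) (h : pmlLength J N g P = 0) :
    g p = g q := by
  have hstep : ∀ i < N, g (P i) = g (P (i + 1)) := fun i hi => by
    have h0 := Finset.sum_eq_zero_iff.1 h i (Finset.mem_range.2 hi)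
    have hle := ofReal_le_pieceLen (J := J) (f := g) (hg.2.2.1 i hi).le
    rw [h0, nonpos_iff_eq_zero, ENNReal.ofReal_eq_zero] at hle
    exact (hiff _ _).1 (le_antisymm hle (hnonneg _ _))
  have hconst : ∀ i ≤ N, g (P i) = g (P 0) := by
    intro i hi
    induction i with
    | zero => rfl
    | succ i ih => rw [← hstep i (by omega), ih (by omega)]
  rw [← hg.1, ← hg.2.1, hconst N le_rfl]

end ArcLength

section Reparametrization

variable {D : X → X → ℝ≥0∞} {g : ℝ → X} {ℓ : ℝ → ℝ}

lemma eq_ofReal_sub_of_shortest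
    (hD_tri : ∀ x y z, D x z ≤ D x y + D y z) (hℓ_mono : MonotoneOn ℓ (Icc 0 1))
    (hℓ0 : ℓ 0 = 0)
    (hD_le : ∀ a b, 0 ≤ a → a ≤ b → b ≤ 1 → D (g a) (g b) ≤ ENNReal.ofReal (ℓ b - ℓ a))
    (hD_ge : ENNReal.ofReal (ℓ 1) ≤ D (g 0) (g 1)) {a b : ℝ} (ha : 0 ≤ a) (hab : a ≤ b)
    (hb : b ≤ 1) : D (g a) (g b) = ENNReal.ofReal (ℓ b - ℓ a) := by
  refine le_antisymm (hD_le a b ha hab hb) ?_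
  have hmem : ∀ {s}, 0 ≤ s → s ≤ 1 → s ∈ Icc (0 : ℝ) 1 := fun h0 h1 => ⟨h0, h1⟩
  have h0a : 0 ≤ ℓ a := hℓ0 ▸ hℓ_mono (hmem le_rfl zero_le_one) (hmem ha (hab.trans hb)) ha
  have hab' : ℓ a ≤ ℓ b := hℓ_mono (hmem ha (hab.trans hb)) (hmem (ha.trans hab) hb) hab
  have hb1 : ℓ b ≤ ℓ 1 := hℓ_mono (hmem (ha.trans hab) hb) (hmem zero_le_one le_rfl) hb
  have hsplit : ENNReal.ofReal (ℓ 1) = ENNReal.ofReal (ℓ a) + ENNReal.ofReal (ℓ b - ℓ a) +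
      ENNReal.ofReal (ℓ 1 - ℓ b) := by
    rw [← ENNReal.ofReal_add h0a (sub_nonneg.2 hab'),
      ← ENNReal.ofReal_add (by linarith) (sub_nonneg.2 hb1)]
    ring_nf
  have hchain : ENNReal.ofReal (ℓ a) + ENNReal.ofReal (ℓ b - ℓ a) + ENNReal.ofReal (ℓ 1 - ℓ b) ≤
      ENNReal.ofReal (ℓ a) + D (g a) (g b) + ENNReal.ofReal (ℓ 1 - ℓ b) :=
    calc _ = ENNReal.ofReal (ℓ 1) := hsplit.symm
      _ ≤ D (g 0) (g 1) := hD_ge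
      _ ≤ D (g 0) (g a) + D (g a) (g b) + D (g b) (g 1) :=
        (hD_tri _ (g b) _).trans (add_le_add_left (hD_tri _ (g a) _) _)
      _ ≤ _ := by
        gcongr
        · simpa [hℓ0] using hD_le 0 a le_rfl ha (hab.trans hb)
        · exact hD_le b 1 (ha.trans hab) hb le_rfl
  exact (ENNReal.add_le_add_iff_left ENNReal.ofReal_ne_top).1
    ((ENNReal.add_le_add_iff_right ENNReal.ofReal_ne_top).1 hchain)

theorem exists_isometry_of_shortest (hD_comm : ∀ x y, D x y = D y x)
    (hD_tri : ∀ x y z, D x z ≤ D x y + D y z) (hℓ_cont : ContinuousOn ℓ (Icc 0 1))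
    (hℓ_mono : MonotoneOn ℓ (Icc 0 1)) (hℓ0 : ℓ 0 = 0)
    (hD_le : ∀ a b, 0 ≤ a → a ≤ b → b ≤ 1 → D (g a) (g b) ≤ ENNReal.ofReal (ℓ b - ℓ a))
    (hD_ge : ENNReal.ofReal (ℓ 1) ≤ D (g 0) (g 1)) (hdeg : ℓ 1 = 0 → g 0 = g 1) :
    ∃ f : ℝ → X, f 0 = g 0 ∧ f (ℓ 1) = g 1 ∧
      ∀ t ∈ Icc 0 (ℓ 1), ∀ s ∈ Icc 0 (ℓ 1), D (f t) (f s) = ENNReal.ofReal |t - s| := by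
  have hsurj : ∀ t ∈ Icc 0 (ℓ 1), ∃ a ∈ Icc (0 : ℝ) 1, ℓ a = t := fun t ht =>
    intermediate_value_Icc zero_le_one hℓ_cont (by rwa [hℓ0])
  choose! σ hσ_mem hσ using hsurj
  -- the endpoints are fixed by hand: `σ` need not send `0` to `0` nor `ℓ 1` to `1`
  set f : ℝ → X := fun t => if t = 0 then g 0 else if t = ℓ 1 then g 1 else g (σ t)
  have hf : ∀ t ∈ Icc 0 (ℓ 1), ∃ a ∈ Icc (0 : ℝ) 1, ℓ a = t ∧ f t = g a := by
    intro t ht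
    by_cases h0 : t = 0
    · exact ⟨0, ⟨le_rfl, zero_le_one⟩, h0 ▸ hℓ0, by simp [f, h0]⟩
    by_cases h1 : t = ℓ 1
    · subst h1
      exact ⟨1, ⟨zero_le_one, le_rfl⟩, rfl, by simp [f, h0]⟩
    · exact ⟨σ t, hσ_mem t ht, hσ t ht, by simp [f, h0, h1]⟩
  have hgeod := fun {a b : ℝ} => eq_ofReal_sub_of_shortest (a := a) (b := b) hD_tri hℓ_mono hℓ0
    hD_le hD_ge
  refine ⟨f, by simp [f], ?_, fun t ht s hs => ?_⟩
  · by_cases h1 : ℓ 1 = 0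
    · simp [f, h1, hdeg h1]
    · simp [f, h1]
  obtain ⟨a, ha, rfl, hfa⟩ := hf t ht
  obtain ⟨b, hb, rfl, hfb⟩ := hf s hs
  rw [hfa, hfb]
  rcases le_total a b with hab | hab
  · rw [hgeod ha.1 hab hb.2, abs_sub_comm, abs_of_nonneg (sub_nonneg.2 (hℓ_mono ha hb hab))]
  · rw [hD_comm, hgeod hb.1 hab ha.2, abs_of_nonneg (sub_nonneg.2 (hℓ_mono hb ha hab))]

end Reparametrization

lemma MonotoneOn.continuousOn_of_sub_le {ℓ : ℝ → ℝ} {s : Set ℝ} {C : ℝ} (hmono : MonotoneOn ℓ s)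
    (h : ∀ a ∈ s, ∀ b ∈ s, a ≤ b → ℓ b - ℓ a ≤ C * (b - a)) : ContinuousOn ℓ s := by
  refine (LipschitzOnWith.of_dist_le' (K := C) fun a ha b hb => ?_).continuousOn
  wlog hab : a ≤ b generalizing a b
  · rw [dist_comm, dist_comm a]
    exact this b hb a ha (le_of_not_ge hab)
  rw [Real.dist_eq, Real.dist_eq, abs_sub_comm, abs_of_nonneg (sub_nonneg.2 (hmono ha hb hab)),
    abs_sub_comm, abs_of_nonneg (sub_nonneg.2 hab)]
  exact h a ha b hb hab

theorem IsPML.exists_isometry_of_pmlLength_eq {J : X → X → ℝ} {N : ℕ} {g : ℝ → X}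
    {P : ℕ → ℝ} (hnonneg : ∀ x y, 0 ≤ J x y) (hiff : ∀ x y, J x y = 0 ↔ x = y)
    (hsymm : ∀ x y, J x y = J y x) (hg : IsPML J N 0 1 g P)
    (hlen : pmlLength J N g P = DJ J (g 0) (g 1)) :
    ∃ f : ℝ → X, f 0 = g 0 ∧ f (DJ J (g 0) (g 1)).toReal = g 1 ∧
      ∀ t ∈ Icc 0 (DJ J (g 0) (g 1)).toReal, ∀ s ∈ Icc 0 (DJ J (g 0) (g 1)).toReal,
        DJ J (f t) (f s) = ENNReal.ofReal |t - s| := by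
  have hJ : ∀ z, J z z = 0 := fun z => (hiff z z).2 rfl
  obtain ⟨C, hC0, hC⟩ := hg.exists_arcLen_le
  have hfin : ∀ a b, a ≤ b → arcLen J N g P a b ≠ ⊤ := fun a b hab =>
    ne_top_of_le_ne_top ENNReal.ofReal_ne_top (hC a b hab)
  set ℓ : ℝ → ℝ := fun s => (arcLen J N g P 0 s).toReal
  have hℓ : ∀ a b, 0 ≤ a → a ≤ b → ℓ b - ℓ a = (arcLen J N g P a b).toReal := by
    intro a b ha hab
    simp only [ℓ]
    rw [← hg.arcLen_add hJ ha hab, ENNReal.toReal_add (hfin _ _ ha) (hfin _ _ hab),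
      add_sub_cancel_left]
  have hℓ_mono : MonotoneOn ℓ (Icc 0 1) := fun a ha b _ hab =>
    sub_nonneg.1 ((hℓ a b ha.1 hab).symm ▸ ENNReal.toReal_nonneg)
  have hℓ_cont : ContinuousOn ℓ (Icc 0 1) := hℓ_mono.continuousOn_of_sub_le fun a ha b _ hab => by
    rw [hℓ a b ha.1 hab]
    exact ENNReal.toReal_le_of_le_ofReal (mul_nonneg hC0 (sub_nonneg.2 hab)) (hC a b hab)
  have hℓ0 : ℓ 0 = 0 := by simp [ℓ, arcLen, pieceLen_self hJ]
  have hℓ1 : ENNReal.ofReal (ℓ 1) = DJ J (g 0) (g 1) := by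
    rw [ENNReal.ofReal_toReal (hfin 0 1 zero_le_one), hg.arcLen_eq_pmlLength, hlen]
  have hℓ1_toReal : ℓ 1 = (DJ J (g 0) (g 1)).toReal := by
    rw [← hℓ1, ENNReal.toReal_ofReal ENNReal.toReal_nonneg]
  rw [← hℓ1_toReal]
  refine exists_isometry_of_shortest (DJ_comm hsymm) DJ_triangle hℓ_cont hℓ_mono hℓ0
    (fun a b ha hab hb => ?_) hℓ1.le fun h => ?_
  · rw [hℓ a b ha hab, ENNReal.ofReal_toReal (hfin a b hab)]
    exact hg.DJ_le_arcLen hJ ha hab hb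
  · refine hg.apply_eq_of_pmlLength_eq_zero hnonneg hiff ?_
    rw [hlen, ← hℓ1, h, ENNReal.ofReal_zero]

theorem stmt_15_general (J : X → X → ℝ)
    (hnonneg : ∀ x y, 0 ≤ J x y)
    (hiff : ∀ x y, J x y = 0 ↔ x = y)
    (hsymm : ∀ x y, J x y = J y x)
    (hperfect : ∀ x y : X, DJ J x y ≠ ⊤ ∧
      ∃ N₀ : ℕ, ∀ N ≥ N₀, DJN J N x y = DJ J x y)
    (hmin : ∀ x y : X, ∃ N₀ : ℕ, ∀ N ≥ N₀,
      ∃ (f : ℝ → X) (P : ℕ → ℝ), (IsPML J N 0 1 f P ∧ f 0 = x ∧ f 1 = y) ∧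
        pmlLength J N f P = DJN J N x y) :
    ∀ x y : X, ∃ f : ℝ → X,
      f 0 = x ∧ f ((DJ J x y).toReal) = y ∧
      ∀ t ∈ Set.Icc (0 : ℝ) ((DJ J x y).toReal),
        ∀ s ∈ Set.Icc (0 : ℝ) ((DJ J x y).toReal),
          DJ J (f t) (f s) = ENNReal.ofReal |t - s| := by
  intro x y
  obtain ⟨-, N₁, hN₁⟩ := hperfect x y
  obtain ⟨N₂, hN₂⟩ := hmin x y
  obtain ⟨g, P, ⟨hg, rfl, rfl⟩, hlen⟩ := hN₂ (max N₁ N₂) (le_max_right _ _)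
  exact hg.exists_isometry_of_pmlLength_eq hnonneg hiff hsymm
    (hlen.trans (hN₁ _ (le_max_left _ _)))

/-- If `(X,J)` is a perfect quasimetric space (for each `x,y`, `D_J^{(N)}(x,y)`
is a finite constant equal to `D_J(x,y)` for all large `N`) and the geodesic
problem over `Path_N(x,y)` has a minimizer for all sufficiently large `N`, then
`(X,D_J)` is a length space: for all `x,y` with `L = D_J(x,y)`, there is a
curve `f : [0,L] → X` from `x` to `y` with `D_J(f t, f s) = |t−s|`. -/
theorem stmt_15 (J : X → X → ℝ) (σ : ℝ)
    (hnonneg : ∀ x y, 0 ≤ J x y)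
    (hiff : ∀ x y, J x y = 0 ↔ x = y)
    (hsymm : ∀ x y, J x y = J y x)
    (hσ : 1 ≤ σ)
    (htri : ∀ x y z, J x y ≤ σ * (J x z + J z y))
    (hperfect : ∀ x y : X, DJ J x y ≠ ⊤ ∧
      ∃ N₀ : ℕ, ∀ N ≥ N₀, DJN J N x y = DJ J x y)
    (hmin : ∀ x y : X, ∃ N₀ : ℕ, ∀ N ≥ N₀,
      ∃ (f : ℝ → X) (P : ℕ → ℝ), (IsPML J N 0 1 f P ∧ f 0 = x ∧ f 1 = y) ∧
        pmlLength J N f P = DJN J N x y) :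
    ∀ x y : X, ∃ f : ℝ → X,
      f 0 = x ∧ f ((DJ J x y).toReal) = y ∧
      ∀ t ∈ Set.Icc (0 : ℝ) ((DJ J x y).toReal),
        ∀ s ∈ Set.Icc (0 : ℝ) ((DJ J x y).toReal),
          DJ J (f t) (f s) = ENNReal.ofReal |t - s| :=
  stmt_15_general J hnonneg hiff hsymm hperfect hmin
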